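/- Let G be a finite simple connected graph on vertex set V, c : V → ℝ, and H a spanning subgraph of G whose connected components have vertex sets C_1, …, C_m. Then the connectedness LP associated with (H, c) is feasible, its optimum is attained, and its optimal value satisfies val(H, c) = Σ_{i=1}^m |Σ_{v∈C_i} c(v)|. -/

import Mathlib

/-! The indicator of a connected component of `H` lies in the kernel of the symmetric matrix
`L_H`, so `L_H θ` sums to zero over every component. For a feasible point this forces
`∑_{v ∈ C} (d₋ - d₊) = ∑_{v ∈ C} c`, whence `∑_{v ∈ C} (d₊ + d₋) ≥ |∑_{v ∈ C} c|`.
Conversely, since `dim ker L_H` is the number of components, the range of `L_H` is exactly the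
space of vectors with zero component sums. So if `g` carries each component sum of `c` on a
single vertex of that component, then `c - g = L_H θ` for some `θ`, and `d₊ = g⁻`, `d₋ = g⁺`
attain the bound. -/

open scoped Classical

open Matrix Finset

lemma abs_sum_le_sum_add_of_sum_eq_zero {ι : Type*} (s : Finset ι) {c p q : ι → ℝ}
    (hp : ∀ i, 0 ≤ p i) (hq : ∀ i, 0 ≤ q i) (h : ∑ i ∈ s, (c i + p i - q i) = 0) :
    |∑ i ∈ s, c i| ≤ ∑ i ∈ s, (p i + q i) := by
  have hc : ∑ i ∈ s, c i = ∑ i ∈ s, (q i - p i) := by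
    simp only [sum_sub_distrib, sum_add_distrib] at h ⊢
    linarith
  rw [hc]
  refine (abs_sum_le_sum_abs _ _).trans (sum_le_sum fun i _ => ?_)
  rw [abs_sub_le_iff]
  constructor <;> linarith [hp i, hq i]

namespace SimpleGraph

variable {V : Type*} (H : SimpleGraph V)

@[simp]
lemma connectedComponentMk_out (C : H.ConnectedComponent) : H.connectedComponentMk C.out = C :=
  Quot.out_eq C

variable [Fintype V] [DecidableEq V]

lemma ConnectedComponent.supp_toFinset_eq_filter (C : H.ConnectedComponent) :
    C.supp.toFinset = univ.filter (H.connectedComponentMk · = C) := by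
  ext v
  simp [ConnectedComponent.mem_supp_iff]

lemma sum_connectedComponent_sum_supp {M : Type*} [AddCommMonoid M] (f : V → M) :
    ∑ C : H.ConnectedComponent, ∑ v ∈ C.supp.toFinset, f v = ∑ v, f v := by
  simp_rw [ConnectedComponent.supp_toFinset_eq_filter]
  exact sum_fiberwise _ _ _

lemma sum_supp_eq_apply_out {M : Type*} [AddCommMonoid M] (C : H.ConnectedComponent) (f : V → M)
    (hf : ∀ v, v ≠ (H.connectedComponentMk v).out → f v = 0) :
    ∑ v ∈ C.supp.toFinset, f v = f C.out := by
  refine sum_eq_single C.out (fun v hv hne => hf v ?_) (fun h => absurd ?_ h)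
  · rwa [Set.mem_toFinset.mp hv]
  · simp [ConnectedComponent.mem_supp_iff]

lemma sum_supp_lapMatrix_mulVec (C : H.ConnectedComponent) (θ : V → ℝ) :
    ∑ v ∈ C.supp.toFinset, (H.lapMatrix ℝ *ᵥ θ) v = 0 := by
  set χ : V → ℝ := fun v => if H.connectedComponentMk v = C then 1 else 0
  have hχ : H.lapMatrix ℝ *ᵥ χ = 0 := mem_ker_toLin'_lapMatrix_of_connectedComponent C
  calc ∑ v ∈ C.supp.toFinset, (H.lapMatrix ℝ *ᵥ θ) v
      = χ ⬝ᵥ (H.lapMatrix ℝ *ᵥ θ) := by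
        simp [χ, ConnectedComponent.supp_toFinset_eq_filter, sum_filter, dotProduct]
    _ = (H.lapMatrix ℝ *ᵥ χ) ⬝ᵥ θ := by
        rw [dotProduct_mulVec, ← mulVec_transpose, (isSymm_lapMatrix ℝ H).eq]
    _ = 0 := by rw [hχ, zero_dotProduct]

noncomputable def componentSum : (V → ℝ) →ₗ[ℝ] (H.ConnectedComponent → ℝ) where
  toFun f C := ∑ v ∈ C.supp.toFinset, f v
  map_add' f g := by ext C; simp [sum_add_distrib]
  map_smul' r f := by ext C; simp [mul_sum]

noncomputable def placeAtOut (a : H.ConnectedComponent → ℝ) (v : V) : ℝ :=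
  if v = (H.connectedComponentMk v).out then a (H.connectedComponentMk v) else 0

lemma sum_supp_placeAtOut (F : ℝ → ℝ) (hF : F 0 = 0) (a : H.ConnectedComponent → ℝ)
    (C : H.ConnectedComponent) :
    ∑ v ∈ C.supp.toFinset, F (H.placeAtOut a v) = F (a C) := by
  rw [sum_supp_eq_apply_out H C _ (fun v hv => by simp [placeAtOut, hv, hF])]
  simp [placeAtOut]

lemma componentSum_surjective : Function.Surjective H.componentSum := fun a =>
  ⟨H.placeAtOut a, funext fun C => H.sum_supp_placeAtOut id rfl a C⟩

lemma range_toLin'_lapMatrix :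
    LinearMap.range (toLin' (H.lapMatrix ℝ)) = LinearMap.ker H.componentSum := by
  have hle : LinearMap.range (toLin' (H.lapMatrix ℝ)) ≤ LinearMap.ker H.componentSum := by
    rintro _ ⟨θ, rfl⟩
    ext C
    exact H.sum_supp_lapMatrix_mulVec C θ
  refine Submodule.eq_of_le_of_finrank_le hle ?_
  have hL := LinearMap.finrank_range_add_finrank_ker (toLin' (H.lapMatrix ℝ))
  have hS := LinearMap.finrank_range_add_finrank_ker H.componentSum
  rw [← card_connectedComponent_eq_finrank_ker_toLin'_lapMatrix] at hL
  rw [LinearMap.range_eq_top.mpr H.componentSum_surjective, finrank_top] at hS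
  simp only [Module.finrank_fintype_fun_eq_card] at hL hS
  omega

lemma exists_lapMatrix_mulVec_eq_iff (f : V → ℝ) :
    (∃ θ, H.lapMatrix ℝ *ᵥ θ = f) ↔ H.componentSum f = 0 := by
  rw [← LinearMap.mem_ker, ← range_toLin'_lapMatrix, LinearMap.mem_range]
  simp only [toLin'_apply]

lemma sum_abs_sum_supp_le_of_lapMatrix_mulVec_eq {c θ p q : V → ℝ} (hp : ∀ v, 0 ≤ p v)
    (hq : ∀ v, 0 ≤ q v) (hθ : H.lapMatrix ℝ *ᵥ θ = c + p - q) :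
    ∑ C : H.ConnectedComponent, |∑ v ∈ C.supp.toFinset, c v| ≤ ∑ v, (p v + q v) := by
  rw [← H.sum_connectedComponent_sum_supp]
  refine sum_le_sum fun C _ => abs_sum_le_sum_add_of_sum_eq_zero _ hp hq ?_
  simpa [hθ] using H.sum_supp_lapMatrix_mulVec C θ

lemma exists_lapMatrix_mulVec_eq_add_sub (c : V → ℝ) :
    ∃ θ p q : V → ℝ, (∀ v, 0 ≤ p v) ∧ (∀ v, 0 ≤ q v) ∧ H.lapMatrix ℝ *ᵥ θ = c + p - q ∧
      ∑ v, (p v + q v) = ∑ C : H.ConnectedComponent, |∑ v ∈ C.supp.toFinset, c v| := by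
  set g := H.placeAtOut (H.componentSum c)
  have hg : H.componentSum g = H.componentSum c := funext (H.sum_supp_placeAtOut id rfl _)
  obtain ⟨θ, hθ⟩ := (H.exists_lapMatrix_mulVec_eq_iff (c - g)).mpr (by rw [map_sub, hg, sub_self])
  refine ⟨θ, g⁻, g⁺, fun v => negPart_nonneg (g v), fun v => posPart_nonneg (g v), ?_, ?_⟩
  · conv_lhs => rw [hθ, ← posPart_sub_negPart g]
    abel
  · simp only [Pi.negPart_apply, Pi.posPart_apply, negPart_add_posPart]
    rw [← H.sum_connectedComponent_sum_supp]
    exact sum_congr rfl fun C _ => H.sum_supp_placeAtOut (|·|) abs_zero _ C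

end SimpleGraph

theorem connectedness_lp_value_general
    {V : Type} [Fintype V] [DecidableEq V]
    (H : SimpleGraph V)
    (c : V → ℝ) :
    IsLeast
      {x : ℝ | ∃ θ dp dm : V → ℝ, (∀ v, 0 ≤ dp v) ∧ (∀ v, 0 ≤ dm v) ∧
        H.lapMatrix ℝ *ᵥ θ = c + dp - dm ∧ x = ∑ v, (dp v + dm v)}
      (∑ C : H.ConnectedComponent, |∑ v ∈ C.supp.toFinset, c v|) := by
  obtain ⟨θ, p, q, hp, hq, hθ, hval⟩ := H.exists_lapMatrix_mulVec_eq_add_sub c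
  refine ⟨⟨θ, p, q, hp, hq, hθ, hval.symm⟩, ?_⟩
  rintro x ⟨θ, p, q, hp, hq, hθ, rfl⟩
  exact H.sum_abs_sum_supp_le_of_lapMatrix_mulVec_eq hp hq hθ

/-- For a finite simple connected graph `G`, a spanning subgraph `H ≤ G`, and
`c : V → ℝ`, the connectedness LP (minimize `Σ (d₊ + d₋)` over `θ, d₊ ≥ 0, d₋ ≥ 0` subject to
`L_H θ = c + d₊ − d₋`) is feasible, its optimum is attained, and its optimal value equals
`Σ_{components C of H} |Σ_{v ∈ C} c v|`: i.e. that number is the least element of the set of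
attainable objective values. -/
theorem connectedness_lp_value
    {V : Type} [Fintype V] [DecidableEq V]
    (G H : SimpleGraph V) (hG : G.Connected) (hHG : H ≤ G)
    (c : V → ℝ) :
    IsLeast
      {x : ℝ | ∃ θ dp dm : V → ℝ, (∀ v, 0 ≤ dp v) ∧ (∀ v, 0 ≤ dm v) ∧
        H.lapMatrix ℝ *ᵥ θ = c + dp - dm ∧ x = ∑ v, (dp v + dm v)}
      (∑ C : H.ConnectedComponent, |∑ v ∈ C.supp.toFinset, c v|) :=
  connectedness_lp_value_general H c
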